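/- In the universe of Partizan Kayles positions, the games R = {0 | ·} (a single pin) and D = {1 | 0} (a pair of adjacent pins, where 1 = {0|·}) are additive inverses: R + D ≡ 0 modulo Partizan Kayles positions, i.e., o⁻(R + D + X) = o⁻(X) for every Partizan Kayles position X; moreover the misère outcome of R is R (Right wins) and the misère outcome of D is P (previous player wins), and neither R nor D is equivalent, modulo this universe, to the conjugate of the other. -/

import Mathlib

namespace SetTheory

universe u

/-- The type of pre-games (removed from Mathlib; restated here with its old definition). -/
inductive PGame : Type (u + 1)
  | mk : ∀ α β : Type u, (α → PGame) → (β → PGame) → PGame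

namespace PGame

/-- The indexing type for allowable moves by Left. -/
def LeftMoves : PGame → Type u
  | mk l _ _ _ => l

/-- The indexing type for allowable moves by Right. -/
def RightMoves : PGame → Type u
  | mk _ r _ _ => r

/-- The new game after Left makes an allowed move. -/
def moveLeft : ∀ g : PGame, LeftMoves g → PGame
  | mk _l _ L _ => L

/-- The new game after Right makes an allowed move. -/
def moveRight : ∀ g : PGame, RightMoves g → PGame
  | mk _ _r _ R => R

/-- `IsOption x y` means that `x` is either a left or right option for `y`. -/
inductive IsOption : PGame → PGame → Prop
  | moveLeft {x : PGame} (i : x.LeftMoves) : IsOption (x.moveLeft i) x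
  | moveRight {x : PGame} (i : x.RightMoves) : IsOption (x.moveRight i) x

/-- `Subsequent x y` says that `x` can be obtained by playing some nonempty sequence of moves
from `y`. -/
def Subsequent : PGame → PGame → Prop :=
  Relation.TransGen IsOption

/-- The pre-game `Zero` is defined by `0 = { | }`. -/
instance : Zero PGame :=
  ⟨⟨PEmpty, PEmpty, PEmpty.elim, PEmpty.elim⟩⟩

/-- The negation of `{L | R}` is `{-R | -L}`. -/
def neg : PGame → PGame
  | ⟨l, r, L, R⟩ => ⟨r, l, fun i => neg (R i), fun i => neg (L i)⟩

instance : Neg PGame :=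
  ⟨neg⟩

/-- Auxiliary for the sum: adds `x = {xL | xR}` (with sums of its options given) to `y`. -/
def addAux {xl xr : Type u} (xL' : xl → PGame → PGame) (xR' : xr → PGame → PGame) :
    PGame → PGame
  | mk yl yr yL yR =>
    mk (xl ⊕ yl) (xr ⊕ yr)
      (Sum.elim (fun i => xL' i (mk yl yr yL yR)) (fun j => addAux xL' xR' (yL j)))
      (Sum.elim (fun i => xR' i (mk yl yr yL yR)) (fun j => addAux xL' xR' (yR j)))

/-- The sum of `x = {xL | xR}` and `y = {yL | yR}` is `{xL + y, x + yL | xR + y, x + yR}`. -/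
def add : PGame → PGame → PGame
  | mk _ _ xL xR => addAux (fun i y => add (xL i) y) (fun i y => add (xR i) y)

instance : Add PGame.{u} :=
  ⟨add⟩

end PGame

end SetTheory

open SetTheory

namespace Misere

/-- Misère winning: `(wins G).1` means Left, moving first on `G`, wins under misère play;
`(wins G).2` means Right, moving first, wins. The player unable to move wins. -/
def wins : PGame → Prop × Prop
  | ⟨α, β, L, R⟩ =>
    (IsEmpty α ∨ ∃ i, ¬ (wins (L i)).2,
     IsEmpty β ∨ ∃ j, ¬ (wins (R j)).1)

/-- Left wins moving first under misère play. -/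
def LeftFirst (G : PGame) : Prop := (wins G).1

/-- Right wins moving first under misère play. -/
def RightFirst (G : PGame) : Prop := (wins G).2

/-- Normal-play winning: `(nwins G).1` means Left moving first wins (player unable to move loses). -/
def nwins : PGame → Prop × Prop
  | ⟨α, β, L, R⟩ =>
    (∃ i, ¬ (nwins (L i)).2,
     ∃ j, ¬ (nwins (R j)).1)

/-- Outcome classes. -/
inductive Outcome : Type
  | L | R | N | P
  deriving DecidableEq

/-- The partial order on outcomes: L > P > R, L > N > R, with P and N incomparable. -/
instance : LE Outcome := ⟨fun a b => a = b ∨ a = .R ∨ b = .L⟩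

open Classical in
/-- The misère outcome of a game. -/
noncomputable def misereOutcome (G : PGame) : Outcome :=
  if (wins G).1 then (if (wins G).2 then .N else .L)
  else (if (wins G).2 then .R else .P)

open Classical in
/-- The normal-play outcome of a game. -/
noncomputable def normalOutcome (G : PGame) : Outcome :=
  if (nwins G).1 then (if (nwins G).2 then .N else .L)
  else (if (nwins G).2 then .R else .P)

/-- A game is dicot if every subposition has a Left option iff it has a Right option. -/
def Dicot : PGame → Prop
  | ⟨α, β, L, R⟩ => (IsEmpty α ↔ IsEmpty β) ∧ (∀ i, Dicot (L i)) ∧ (∀ j, Dicot (R j))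

/-- A dead Left end: a Left end all of whose followers are Left ends. -/
def DeadLeftEnd : PGame → Prop
  | ⟨α, _β, _L, R⟩ => IsEmpty α ∧ ∀ j, DeadLeftEnd (R j)

/-- A dead Right end: a Right end all of whose followers are Right ends. -/
def DeadRightEnd : PGame → Prop
  | ⟨_α, β, L, _R⟩ => IsEmpty β ∧ ∀ i, DeadRightEnd (L i)

/-- A follower of `G` is any position reachable from `G`, including `G` itself. -/
def Follower (H G : PGame) : Prop := H = G ∨ PGame.Subsequent H G

/-- An end: a position where some player has no move. -/
def IsEnd (G : PGame) : Prop := IsEmpty G.LeftMoves ∨ IsEmpty G.RightMoves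

/-- A game is dead-ending if every one of its end followers is a dead end. -/
def DeadEnding (G : PGame) : Prop :=
  ∀ H, Follower H G → IsEnd H → (DeadLeftEnd H ∨ DeadRightEnd H)

end Misere

namespace Misere

/-- A single row of `n` Kayles pins: Left removes one pin, Right removes two adjacent pins. -/
def row : ℕ → PGame
  | n => PGame.mk (Fin n) (Fin (n - 1))
      (fun i => row i.val + row (n - 1 - i.val))
      (fun j => row j.val + row (n - 2 - j.val))
  termination_by n => n
  decreasing_by
  · exact i.isLt
  · have := i.isLt; omega
  · have := j.isLt; omega
  · have := j.isLt; omega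

/-- The universe of Partizan Kayles positions: rows of pins, closed under disjunctive sum
and followers. -/
inductive Kayles : PGame → Prop
  | row (n : ℕ) : Kayles (row n)
  | add {G H : PGame} : Kayles G → Kayles H → Kayles (G + H)
  | follower {G H : PGame} : Kayles G → PGame.Subsequent H G → Kayles H

/-- The value of a single pin, `{0 | ·}`. -/
def pin : PGame := PGame.mk PUnit PEmpty (fun _ => 0) (fun x => x.elim)

/-- The value of a pair of adjacent pins, `{1 | 0}` where `1 = {0 | ·}`. -/
def pinPair : PGame := PGame.mk PUnit PUnit (fun _ => pin) (fun _ => 0)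

end Misere

namespace SetTheory

namespace PGame

universe u

@[simp] theorem leftMoves_mk {xl xr : Type u} {xL : xl → PGame} {xR : xr → PGame} :
    (PGame.mk xl xr xL xR).LeftMoves = xl := rfl

@[simp] theorem rightMoves_mk {xl xr : Type u} {xL : xl → PGame} {xR : xr → PGame} :
    (PGame.mk xl xr xL xR).RightMoves = xr := rfl

@[simp] theorem moveLeft_mk {xl xr : Type u} {xL : xl → PGame} {xR : xr → PGame} :
    (PGame.mk xl xr xL xR).moveLeft = xL := rfl

@[simp] theorem moveRight_mk {xl xr : Type u} {xL : xl → PGame} {xR : xr → PGame} :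
    (PGame.mk xl xr xL xR).moveRight = xR := rfl

noncomputable def moveRecOn {C : PGame.{u} → Sort _} (x : PGame.{u})
    (IH : ∀ y : PGame, (∀ i, C (y.moveLeft i)) → (∀ j, C (y.moveRight j)) → C y) : C x :=
  x.recOn fun yl yr yL yR => IH (mk yl yr yL yR)

theorem leftMoves_add (x y : PGame.{u}) : (x + y).LeftMoves = (x.LeftMoves ⊕ y.LeftMoves) := by
  cases x; cases y; rfl

theorem rightMoves_add (x y : PGame.{u}) :
    (x + y).RightMoves = (x.RightMoves ⊕ y.RightMoves) := by
  cases x; cases y; rfl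

def toLeftMovesAdd {x y : PGame.{u}} : x.LeftMoves ⊕ y.LeftMoves ≃ (x + y).LeftMoves :=
  Equiv.cast (leftMoves_add x y).symm

def toRightMovesAdd {x y : PGame.{u}} : x.RightMoves ⊕ y.RightMoves ≃ (x + y).RightMoves :=
  Equiv.cast (rightMoves_add x y).symm

theorem add_moveLeft_inl (x : PGame.{u}) {y : PGame.{u}} (i : x.LeftMoves) :
    (x + y).moveLeft (toLeftMovesAdd (Sum.inl i)) = x.moveLeft i + y := by
  cases x; cases y; rfl

theorem add_moveLeft_inr (x : PGame.{u}) {y : PGame.{u}} (i : y.LeftMoves) :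
    (x + y).moveLeft (toLeftMovesAdd (Sum.inr i)) = x + y.moveLeft i := by
  cases x; cases y; rfl

theorem add_moveRight_inl (x : PGame.{u}) {y : PGame.{u}} (i : x.RightMoves) :
    (x + y).moveRight (toRightMovesAdd (Sum.inl i)) = x.moveRight i + y := by
  cases x; cases y; rfl

theorem add_moveRight_inr (x : PGame.{u}) {y : PGame.{u}} (i : y.RightMoves) :
    (x + y).moveRight (toRightMovesAdd (Sum.inr i)) = x + y.moveRight i := by
  cases x; cases y; rfl

theorem leftMoves_add_cases {x y : PGame.{u}} (k : (x + y).LeftMoves)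
    {P : (x + y).LeftMoves → Prop}
    (hl : ∀ i, P (toLeftMovesAdd (Sum.inl i))) (hr : ∀ i, P (toLeftMovesAdd (Sum.inr i))) :
    P k := by
  rw [← toLeftMovesAdd.apply_symm_apply k]
  rcases toLeftMovesAdd.symm k with i | i
  · exact hl i
  · exact hr i

theorem rightMoves_add_cases {x y : PGame.{u}} (k : (x + y).RightMoves)
    {P : (x + y).RightMoves → Prop}
    (hl : ∀ i, P (toRightMovesAdd (Sum.inl i))) (hr : ∀ i, P (toRightMovesAdd (Sum.inr i))) :
    P k := by
  rw [← toRightMovesAdd.apply_symm_apply k]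
  rcases toRightMovesAdd.symm k with i | i
  · exact hl i
  · exact hr i

theorem leftMoves_neg (x : PGame.{u}) : (-x).LeftMoves = x.RightMoves := by cases x; rfl

theorem rightMoves_neg (x : PGame.{u}) : (-x).RightMoves = x.LeftMoves := by cases x; rfl

def toLeftMovesNeg {x : PGame.{u}} : x.RightMoves ≃ (-x).LeftMoves :=
  Equiv.cast (leftMoves_neg x).symm

def toRightMovesNeg {x : PGame.{u}} : x.LeftMoves ≃ (-x).RightMoves :=
  Equiv.cast (rightMoves_neg x).symm

theorem moveLeft_neg' {x : PGame.{u}} (i : (-x).LeftMoves) :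
    (-x).moveLeft i = -x.moveRight (toLeftMovesNeg.symm i) := by cases x; rfl

theorem moveRight_neg' {x : PGame.{u}} (i : (-x).RightMoves) :
    (-x).moveRight i = -x.moveLeft (toRightMovesNeg.symm i) := by cases x; rfl

instance isEmpty_zero_leftMoves : IsEmpty (LeftMoves 0) := PEmpty.instIsEmpty

instance isEmpty_zero_rightMoves : IsEmpty (RightMoves 0) := PEmpty.instIsEmpty

instance : NegZeroClass PGame.{u} where
  neg_zero := by
    change PGame.mk PEmpty PEmpty (fun i => neg (PEmpty.elim i)) (fun i => neg (PEmpty.elim i))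
      = PGame.mk PEmpty PEmpty PEmpty.elim PEmpty.elim
    congr <;> funext i <;> exact i.elim

end PGame

end SetTheory

namespace Misere

open PGame

theorem wins1_iff (G : PGame) :
    (wins G).1 ↔ (IsEmpty G.LeftMoves ∨ ∃ i, ¬ (wins (G.moveLeft i)).2) := by
  cases G with
  | mk α β L R => rw [wins]; exact Iff.rfl

theorem wins2_iff (G : PGame) :
    (wins G).2 ↔ (IsEmpty G.RightMoves ∨ ∃ j, ¬ (wins (G.moveRight j)).1) := by
  cases G with
  | mk α β L R => rw [wins]; exact Iff.rfl

/-- weight of a row by its length mod 3 -/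
def w (n : ℕ) : ℤ := if n % 3 = 1 then -1 else if n % 3 = 2 then 1 else 0

lemma wfacts (k : ℕ) :
    (k % 3 = 0 ∧ w k = 0) ∨ (k % 3 = 1 ∧ w k = -1) ∨ (k % 3 = 2 ∧ w k = 1) := by
  unfold w
  rcases h : k % 3 with - | m
  · simp [h]
  · rcases m with - | m
    · simp [h]
    · rcases m with - | m
      · simp [h]
      · omega

def ev (m : Multiset ℕ) : ℤ := (m.map w).sum

lemma ev_add (m₁ m₂ : Multiset ℕ) : ev (m₁ + m₂) = ev m₁ + ev m₂ := by
  simp [ev]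

lemma ev_singleton (n : ℕ) : ev {n} = w n := by simp [ev]

lemma ev_eq_zero {m : Multiset ℕ} (h : ∀ x ∈ m, x = 0) : ev m = 0 := by
  apply Multiset.sum_eq_zero
  intro z hz
  obtain ⟨x, hx, rfl⟩ := Multiset.mem_map.mp hz
  have := h x hx; subst this
  simp [w]

lemma ev_cons (a : ℕ) (s : Multiset ℕ) : ev (a ::ₘ s) = w a + ev s := by
  simp [ev]

lemma ev_nonpos {m : Multiset ℕ} (h : ∀ x ∈ m, x ≤ 1) : ev m ≤ 0 := by
  induction m using Multiset.induction_on with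
  | empty => simp [ev]
  | cons a s ih =>
    rw [ev_cons]
    have ha := h a (Multiset.mem_cons_self a s)
    have hs := ih (fun x hx => h x (Multiset.mem_cons_of_mem hx))
    rcases wfacts a with ⟨h1, h2⟩ | ⟨h1, h2⟩ | ⟨h1, h2⟩ <;> omega

lemma ev_nonneg02 {m : Multiset ℕ} (h : ∀ x ∈ m, x = 0 ∨ x = 2) : 0 ≤ ev m := by
  apply Multiset.sum_nonneg
  intro z hz
  obtain ⟨x, hx, rfl⟩ := Multiset.mem_map.mp hz
  rcases h x hx with rfl | rfl <;> simp [w]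

lemma ev_pos {m : Multiset ℕ} (h : ∀ x ∈ m, x = 0 ∨ x = 2)
    (hx : ∃ x ∈ m, 1 ≤ x) : 1 ≤ ev m := by
  obtain ⟨x, hxm, hx1⟩ := hx
  have hx2 : x = 2 := by rcases h x hxm with rfl | rfl <;> omega
  subst hx2
  have hm : (2 : ℕ) ::ₘ m.erase 2 = m := Multiset.cons_erase hxm
  have h0 : 0 ≤ ev (m.erase 2) :=
    ev_nonneg02 (fun y hy => h y (Multiset.mem_of_mem_erase hy))
  have : ev m = w 2 + ev (m.erase 2) := by
    rw [← hm]; simp [ev]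
  rw [this]
  have : w 2 = 1 := by simp [w]
  omega

/-- Games realizing a multiset of Kayles rows (with `pin`, `pinPair` as 1- and 2-rows). -/
inductive MK : PGame → Multiset ℕ → Prop
  | zero : MK 0 0
  | pin : MK pin {1}
  | pair : MK pinPair {2}
  | row (n : ℕ) : MK (row n) {n}
  | add {G H : PGame} {m₁ m₂ : Multiset ℕ} :
      MK G m₁ → MK H m₂ → MK (G + H) (m₁ + m₂)

lemma row_def (n : ℕ) : row n = PGame.mk (Fin n) (Fin (n - 1))
    (fun i => row i.val + row (n - 1 - i.val))
    (fun j => row j.val + row (n - 2 - j.val)) := by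
  rw [row]

theorem MK.opts {G : PGame} {m : Multiset ℕ} (h : MK G m) :
    (IsEmpty G.LeftMoves ↔ ∀ x ∈ m, x = 0) ∧
    (IsEmpty G.RightMoves ↔ ∀ x ∈ m, x ≤ 1) ∧
    (∀ i, ∃ m', MK (G.moveLeft i) m' ∧ (ev m' = ev m + 1 ∨ ev m' = ev m - 2)) ∧
    (∀ j, ∃ m', MK (G.moveRight j) m' ∧ (ev m' = ev m - 1 ∨ ev m' = ev m + 2)) ∧
    ((∃ x ∈ m, 1 ≤ x) →
      (∃ i, ∃ m', MK (G.moveLeft i) m' ∧ ev m' = ev m + 1) ∨ (∀ x ∈ m, x = 0 ∨ x = 2)) ∧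
    ((∃ x ∈ m, 2 ≤ x) → ∃ j, ∃ m', MK (G.moveRight j) m' ∧ ev m' = ev m - 1) := by
  induction h with
  | zero =>
    refine ⟨?_, ?_, ?_, ?_, ?_, ?_⟩
    · simp only [Multiset.notMem_zero, false_implies, implies_true, iff_true]
      exact PEmpty.instIsEmpty
    · simp only [Multiset.notMem_zero, false_implies, implies_true, iff_true]
      exact PEmpty.instIsEmpty
    · exact fun i => isEmptyElim i
    · exact fun j => isEmptyElim j
    · rintro ⟨x, hx, -⟩; exact absurd hx (Multiset.notMem_zero x)
    · rintro ⟨x, hx, -⟩; exact absurd hx (Multiset.notMem_zero x)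
  | pin =>
    refine ⟨?_, ?_, ?_, ?_, ?_, ?_⟩
    · constructor
      · intro he; exact ((he.false PUnit.unit)).elim
      · intro hz; exact absurd (hz 1 (Multiset.mem_singleton_self 1)) one_ne_zero
    · constructor
      · intro _ x hx; rw [Multiset.mem_singleton] at hx; omega
      · intro _; exact PEmpty.instIsEmpty
    · intro i
      refine ⟨0, MK.zero, Or.inl ?_⟩
      rw [ev_singleton]; simp [ev, w]
    · exact fun j => PEmpty.elim j
    · intro _
      refine Or.inl ⟨PUnit.unit, 0, MK.zero, ?_⟩
      rw [ev_singleton]; simp [ev, w]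
    · rintro ⟨x, hx, hx2⟩; rw [Multiset.mem_singleton] at hx; omega
  | pair =>
    refine ⟨?_, ?_, ?_, ?_, ?_, ?_⟩
    · constructor
      · intro he; exact ((he.false PUnit.unit)).elim
      · intro hz; have := hz 2 (Multiset.mem_singleton_self 2); omega
    · constructor
      · intro he; exact ((he.false PUnit.unit)).elim
      · intro hz; have := hz 2 (Multiset.mem_singleton_self 2); omega
    · intro i
      refine ⟨{1}, MK.pin, Or.inr ?_⟩
      rw [ev_singleton, ev_singleton]; simp [w]
    · intro j
      refine ⟨0, MK.zero, Or.inl ?_⟩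
      rw [ev_singleton]; simp [ev, w]
    · intro _
      refine Or.inr ?_
      intro x hx; rw [Multiset.mem_singleton] at hx; omega
    · intro _
      refine ⟨PUnit.unit, 0, MK.zero, ?_⟩
      rw [ev_singleton]; simp [ev, w]
  | row n =>
    rw [row_def n]
    simp only [PGame.leftMoves_mk, PGame.rightMoves_mk, PGame.moveLeft_mk,
      PGame.moveRight_mk]
    refine ⟨?_, ?_, ?_, ?_, ?_, ?_⟩
    · simp only [Multiset.mem_singleton, forall_eq]
      constructor
      · intro he; by_contra hn
        exact he.false (⟨0, by omega⟩ : Fin n)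
      · rintro rfl; infer_instance
    · simp only [Multiset.mem_singleton, forall_eq]
      constructor
      · intro he; by_contra hn
        exact he.false (⟨0, by omega⟩ : Fin (n - 1))
      · intro hn
        have : n - 1 = 0 := by omega
        rw [this]; infer_instance
    · intro i
      refine ⟨{(i : ℕ)} + {n - 1 - (i : ℕ)}, MK.add (MK.row _) (MK.row _), ?_⟩
      have hi := i.isLt
      rw [ev_add, ev_singleton, ev_singleton, ev_singleton]
      rcases wfacts (i : ℕ) with ⟨ha, hb⟩ | ⟨ha, hb⟩ | ⟨ha, hb⟩ <;>
        rcases wfacts (n - 1 - (i : ℕ)) with ⟨hc, hd⟩ | ⟨hc, hd⟩ | ⟨hc, hd⟩ <;>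
        rcases wfacts n with ⟨he, hf⟩ | ⟨he, hf⟩ | ⟨he, hf⟩ <;> omega
    · intro j
      refine ⟨{(j : ℕ)} + {n - 2 - (j : ℕ)}, MK.add (MK.row _) (MK.row _), ?_⟩
      have hj := j.isLt
      rw [ev_add, ev_singleton, ev_singleton, ev_singleton]
      rcases wfacts (j : ℕ) with ⟨ha, hb⟩ | ⟨ha, hb⟩ | ⟨ha, hb⟩ <;>
        rcases wfacts (n - 2 - (j : ℕ)) with ⟨hc, hd⟩ | ⟨hc, hd⟩ | ⟨hc, hd⟩ <;>
        rcases wfacts n with ⟨he, hf⟩ | ⟨he, hf⟩ | ⟨he, hf⟩ <;> omega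
    · rintro ⟨x, hx, hx1⟩
      rw [Multiset.mem_singleton] at hx; subst hx
      by_cases h2 : x = 2
      · exact Or.inr (fun y hy => by rw [Multiset.mem_singleton] at hy; omega)
      · left
        by_cases hmod : x % 3 = 2
        · have h5 : 5 ≤ x := by omega
          refine ⟨(⟨2, by omega⟩ : Fin x), {(2 : ℕ)} + {x - 1 - 2},
            MK.add (MK.row _) (MK.row _), ?_⟩
          rw [ev_add, ev_singleton, ev_singleton, ev_singleton]
          rcases wfacts 2 with ⟨ha, hb⟩ | ⟨ha, hb⟩ | ⟨ha, hb⟩ <;>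
            rcases wfacts (x - 1 - 2) with ⟨hc, hd⟩ | ⟨hc, hd⟩ | ⟨hc, hd⟩ <;>
            rcases wfacts x with ⟨he, hf⟩ | ⟨he, hf⟩ | ⟨he, hf⟩ <;> omega
        · refine ⟨(⟨0, by omega⟩ : Fin x), {(0 : ℕ)} + {x - 1 - 0},
            MK.add (MK.row _) (MK.row _), ?_⟩
          rw [ev_add, ev_singleton, ev_singleton, ev_singleton]
          rcases wfacts 0 with ⟨ha, hb⟩ | ⟨ha, hb⟩ | ⟨ha, hb⟩ <;>
            rcases wfacts (x - 1 - 0) with ⟨hc, hd⟩ | ⟨hc, hd⟩ | ⟨hc, hd⟩ <;>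
            rcases wfacts x with ⟨he, hf⟩ | ⟨he, hf⟩ | ⟨he, hf⟩ <;> omega
    · rintro ⟨x, hx, hx2⟩
      rw [Multiset.mem_singleton] at hx; subst hx
      by_cases hmod : x % 3 = 1
      · have h4 : 4 ≤ x := by omega
        refine ⟨(⟨1, by omega⟩ : Fin (x - 1)), {(1 : ℕ)} + {x - 2 - 1},
          MK.add (MK.row _) (MK.row _), ?_⟩
        rw [ev_add, ev_singleton, ev_singleton, ev_singleton]
        rcases wfacts 1 with ⟨ha, hb⟩ | ⟨ha, hb⟩ | ⟨ha, hb⟩ <;>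
          rcases wfacts (x - 2 - 1) with ⟨hc, hd⟩ | ⟨hc, hd⟩ | ⟨hc, hd⟩ <;>
          rcases wfacts x with ⟨he, hf⟩ | ⟨he, hf⟩ | ⟨he, hf⟩ <;> omega
      · refine ⟨(⟨0, by omega⟩ : Fin (x - 1)), {(0 : ℕ)} + {x - 2 - 0},
          MK.add (MK.row _) (MK.row _), ?_⟩
        rw [ev_add, ev_singleton, ev_singleton, ev_singleton]
        rcases wfacts 0 with ⟨ha, hb⟩ | ⟨ha, hb⟩ | ⟨ha, hb⟩ <;>
          rcases wfacts (x - 2 - 0) with ⟨hc, hd⟩ | ⟨hc, hd⟩ | ⟨hc, hd⟩ <;>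
          rcases wfacts x with ⟨he, hf⟩ | ⟨he, hf⟩ | ⟨he, hf⟩ <;> omega
  | @add G H m₁ m₂ hG hH ih₁ ih₂ =>
    obtain ⟨e1G, e2G, movLG, movRG, bG, rG⟩ := ih₁
    obtain ⟨e1H, e2H, movLH, movRH, bH, rH⟩ := ih₂
    refine ⟨?_, ?_, ?_, ?_, ?_, ?_⟩
    · rw [show IsEmpty (G + H).LeftMoves ↔ IsEmpty (G.LeftMoves ⊕ H.LeftMoves) from
        by rw [leftMoves_add], isEmpty_sum, e1G, e1H]
      constructor
      · rintro ⟨h1, h2⟩ x hx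
        rcases Multiset.mem_add.mp hx with hx | hx
        · exact h1 x hx
        · exact h2 x hx
      · intro hz
        exact ⟨fun x hx => hz x (Multiset.mem_add.mpr (Or.inl hx)),
               fun x hx => hz x (Multiset.mem_add.mpr (Or.inr hx))⟩
    · rw [show IsEmpty (G + H).RightMoves ↔ IsEmpty (G.RightMoves ⊕ H.RightMoves) from
        by rw [rightMoves_add], isEmpty_sum, e2G, e2H]
      constructor
      · rintro ⟨h1, h2⟩ x hx
        rcases Multiset.mem_add.mp hx with hx | hx
        · exact h1 x hx
        · exact h2 x hx
      · intro hz
        exact ⟨fun x hx => hz x (Multiset.mem_add.mpr (Or.inl hx)),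
               fun x hx => hz x (Multiset.mem_add.mpr (Or.inr hx))⟩
    · intro i
      refine PGame.leftMoves_add_cases (P := fun k => ∃ m', MK ((G + H).moveLeft k) m' ∧
        (ev m' = ev (m₁ + m₂) + 1 ∨ ev m' = ev (m₁ + m₂) - 2)) i ?_ ?_
      · intro i₀
        obtain ⟨m', hm', hv⟩ := movLG i₀
        refine ⟨m' + m₂, ?_, ?_⟩
        · rw [PGame.add_moveLeft_inl]; exact hm'.add hH
        · rw [ev_add, ev_add]; omega
      · intro i₀
        obtain ⟨m', hm', hv⟩ := movLH i₀
        refine ⟨m₁ + m', ?_, ?_⟩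
        · rw [PGame.add_moveLeft_inr]; exact hG.add hm'
        · rw [ev_add, ev_add]; omega
    · intro j
      refine PGame.rightMoves_add_cases (P := fun k => ∃ m', MK ((G + H).moveRight k) m' ∧
        (ev m' = ev (m₁ + m₂) - 1 ∨ ev m' = ev (m₁ + m₂) + 2)) j ?_ ?_
      · intro j₀
        obtain ⟨m', hm', hv⟩ := movRG j₀
        refine ⟨m' + m₂, ?_, ?_⟩
        · rw [PGame.add_moveRight_inl]; exact hm'.add hH
        · rw [ev_add, ev_add]; omega
      · intro j₀
        obtain ⟨m', hm', hv⟩ := movRH j₀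
        refine ⟨m₁ + m', ?_, ?_⟩
        · rw [PGame.add_moveRight_inr]; exact hG.add hm'
        · rw [ev_add, ev_add]; omega
    · rintro ⟨x, hx, hx1⟩
      rcases Multiset.mem_add.mp hx with hx' | hx'
      · rcases bG ⟨x, hx', hx1⟩ with ⟨i, m', hm', hv⟩ | h02
        · refine Or.inl ⟨toLeftMovesAdd (Sum.inl i), m' + m₂, ?_, ?_⟩
          · rw [PGame.add_moveLeft_inl]; exact hm'.add hH
          · rw [ev_add, ev_add]; omega
        · by_cases hp : ∃ y ∈ m₂, 1 ≤ y
          · rcases bH hp with ⟨i, m', hm', hv⟩ | h02'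
            · refine Or.inl ⟨toLeftMovesAdd (Sum.inr i), m₁ + m', ?_, ?_⟩
              · rw [PGame.add_moveLeft_inr]; exact hG.add hm'
              · rw [ev_add, ev_add]; omega
            · refine Or.inr (fun y hy => ?_)
              rcases Multiset.mem_add.mp hy with hy | hy
              · exact h02 y hy
              · exact h02' y hy
          · push_neg at hp
            refine Or.inr (fun y hy => ?_)
            rcases Multiset.mem_add.mp hy with hy | hy
            · exact h02 y hy
            · have := hp y hy; omega
      · rcases bH ⟨x, hx', hx1⟩ with ⟨i, m', hm', hv⟩ | h02
        · refine Or.inl ⟨toLeftMovesAdd (Sum.inr i), m₁ + m', ?_, ?_⟩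
          · rw [PGame.add_moveLeft_inr]; exact hG.add hm'
          · rw [ev_add, ev_add]; omega
        · by_cases hp : ∃ y ∈ m₁, 1 ≤ y
          · rcases bG hp with ⟨i, m', hm', hv⟩ | h02'
            · refine Or.inl ⟨toLeftMovesAdd (Sum.inl i), m' + m₂, ?_, ?_⟩
              · rw [PGame.add_moveLeft_inl]; exact hm'.add hH
              · rw [ev_add, ev_add]; omega
            · refine Or.inr (fun y hy => ?_)
              rcases Multiset.mem_add.mp hy with hy | hy
              · exact h02' y hy
              · exact h02 y hy
          · push_neg at hp
            refine Or.inr (fun y hy => ?_)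
            rcases Multiset.mem_add.mp hy with hy | hy
            · have := hp y hy; omega
            · exact h02 y hy
    · rintro ⟨x, hx, hx2⟩
      rcases Multiset.mem_add.mp hx with hx' | hx'
      · obtain ⟨j, m', hm', hv⟩ := rG ⟨x, hx', hx2⟩
        refine ⟨toRightMovesAdd (Sum.inl j), m' + m₂, ?_, ?_⟩
        · rw [PGame.add_moveRight_inl]; exact hm'.add hH
        · rw [ev_add, ev_add]; omega
      · obtain ⟨j, m', hm', hv⟩ := rH ⟨x, hx', hx2⟩
        refine ⟨toRightMovesAdd (Sum.inr j), m₁ + m', ?_, ?_⟩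
        · rw [PGame.add_moveRight_inr]; exact hG.add hm'
        · rw [ev_add, ev_add]; omega

theorem MK.wins_eval : ∀ (G : PGame) (m : Multiset ℕ), MK G m →
    ((wins G).1 ↔ (0 ≤ ev m ∧ ev m % 3 = 0)) ∧
    ((wins G).2 ↔ (ev m < 0 ∨ ev m % 3 ≠ 1)) := by
  intro G
  induction G using PGame.moveRecOn with
  | _ G ihl ihr =>
  intro m h
  obtain ⟨e1, e2, movL, movR, hB, h3R⟩ := h.opts
  constructor
  · rw [wins1_iff]
    constructor
    · rintro (hempty | ⟨i, hi⟩)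
      · have hz := ev_eq_zero (e1.mp hempty)
        omega
      · obtain ⟨m', hm', hval⟩ := movL i
        rw [(ihl i m' hm').2] at hi
        push_neg at hi
        omega
    · rintro ⟨hge, hmod⟩
      by_cases hE : IsEmpty G.LeftMoves
      · exact Or.inl hE
      · have hpin : ∃ x ∈ m, 1 ≤ x := by
          by_contra hc
          push_neg at hc
          exact hE (e1.mpr (fun x hx => by have := hc x hx; omega))
        right
        rcases hB hpin with ⟨i, m', hm', hval⟩ | h02
        · refine ⟨i, ?_⟩
          rw [(ihl i m' hm').2]
          push_neg
          omega
        · have he1 : 1 ≤ ev m := ev_pos h02 hpin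
          obtain ⟨i⟩ := not_isEmpty_iff.mp hE
          obtain ⟨m', hm', hval⟩ := movL i
          refine ⟨i, ?_⟩
          rw [(ihl i m' hm').2]
          push_neg
          omega
  · rw [wins2_iff]
    constructor
    · rintro (hempty | ⟨j, hj⟩)
      · have hz := ev_nonpos (e2.mp hempty)
        omega
      · obtain ⟨m', hm', hval⟩ := movR j
        rw [(ihr j m' hm').1] at hj
        omega
    · intro hyp
      by_cases hE : IsEmpty G.RightMoves
      · exact Or.inl hE
      · have h2x : ∃ x ∈ m, 2 ≤ x := by
          by_contra hc
          push_neg at hc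
          exact hE (e2.mpr (fun x hx => by have := hc x hx; omega))
        obtain ⟨j, m', hm', hval⟩ := h3R h2x
        refine Or.inr ⟨j, ?_⟩
        rw [(ihr j m' hm').1]
        omega

lemma MK.isOption {G H : PGame} {m : Multiset ℕ} (h : MK G m)
    (ho : PGame.IsOption H G) : ∃ m', MK H m' := by
  cases ho with
  | moveLeft i => obtain ⟨m', hm', -⟩ := h.opts.2.2.1 i; exact ⟨m', hm'⟩
  | moveRight j => obtain ⟨m', hm', -⟩ := h.opts.2.2.2.1 j; exact ⟨m', hm'⟩

lemma MK.subsequent {G H : PGame} (hs : PGame.Subsequent H G) :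
    ∀ m, MK G m → ∃ m', MK H m' := by
  induction hs with
  | single h' => exact fun m hm => hm.isOption h'
  | tail hs h' ih =>
    intro m hm
    obtain ⟨m₂, hm₂⟩ := hm.isOption h'
    exact ih m₂ hm₂

lemma kayles_MK {X : PGame} (h : Kayles X) : ∃ m, MK X m := by
  induction h with
  | row n => exact ⟨{n}, MK.row n⟩
  | add hG hH ihG ihH =>
    obtain ⟨m₁, h₁⟩ := ihG
    obtain ⟨m₂, h₂⟩ := ihH
    exact ⟨m₁ + m₂, h₁.add h₂⟩
  | follower hG hsub ih =>
    obtain ⟨m, hm⟩ := ih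
    exact MK.subsequent hsub m hm

lemma misereOutcome_congr {G H : PGame} (h1 : (wins G).1 ↔ (wins H).1)
    (h2 : (wins G).2 ↔ (wins H).2) : misereOutcome G = misereOutcome H := by
  unfold misereOutcome
  by_cases hG1 : (wins G).1 <;> by_cases hG2 : (wins G).2 <;>
    simp [hG1, hG2, ← h1, ← h2]

lemma misereOutcome_eq_R {G : PGame} (h1 : ¬ (wins G).1) (h2 : (wins G).2) :
    misereOutcome G = Outcome.R := by simp [misereOutcome, h1, h2]

lemma misereOutcome_eq_P {G : PGame} (h1 : ¬ (wins G).1) (h2 : ¬ (wins G).2) :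
    misereOutcome G = Outcome.P := by simp [misereOutcome, h1, h2]

lemma misereOutcome_eq_L {G : PGame} (h1 : (wins G).1) (h2 : ¬ (wins G).2) :
    misereOutcome G = Outcome.L := by simp [misereOutcome, h1, h2]


lemma wins_zero_1 : (wins (0 : PGame)).1 := by
  rw [wins1_iff]
  exact Or.inl PEmpty.instIsEmpty

lemma wins_zero_2 : (wins (0 : PGame)).2 := by
  rw [wins2_iff]
  exact Or.inl PEmpty.instIsEmpty

lemma wins_pin_1 : ¬ (wins pin).1 := by
  rw [wins1_iff]
  push_neg
  constructor
  · exact ⟨PUnit.unit⟩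
  · intro i; exact wins_zero_2
lemma wins_pin_2 : (wins pin).2 := by
  rw [wins2_iff]
  exact Or.inl PEmpty.instIsEmpty

lemma wins_pinPair_1 : ¬ (wins pinPair).1 := by
  rw [wins1_iff]
  push_neg
  constructor
  · exact ⟨PUnit.unit⟩
  · intro i; exact wins_pin_2

lemma wins_pinPair_2 : ¬ (wins pinPair).2 := by
  rw [wins2_iff]
  push_neg
  constructor
  · exact ⟨PUnit.unit⟩
  · intro j; exact wins_zero_1

lemma row0_left_empty : IsEmpty (row 0).LeftMoves := by
  rw [row_def 0]; simp only [PGame.leftMoves_mk]; infer_instance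

lemma row0_right_empty : IsEmpty (row 0).RightMoves := by
  rw [row_def 0]; simp only [PGame.rightMoves_mk]
  exact ⟨fun j => absurd j.isLt (by omega)⟩

lemma wins_zero_add_row0_1 : (wins (0 + row 0)).1 := by
  rw [wins1_iff]
  refine Or.inl ?_
  rw [leftMoves_add]
  exact isEmpty_sum.mpr ⟨PEmpty.instIsEmpty, row0_left_empty⟩

lemma wins_zero_add_row0_2 : (wins (0 + row 0)).2 := by
  rw [wins2_iff]
  refine Or.inl ?_
  rw [rightMoves_add]
  exact isEmpty_sum.mpr ⟨PEmpty.instIsEmpty, row0_right_empty⟩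

lemma wins_negpin_row0_1 : (wins (-pin + row 0)).1 := by
  rw [wins1_iff]
  refine Or.inl ?_
  rw [leftMoves_add]
  refine isEmpty_sum.mpr ⟨?_, row0_left_empty⟩
  rw [leftMoves_neg]
  exact PEmpty.instIsEmpty

lemma wins_negpin_row0_2 : ¬ (wins (-pin + row 0)).2 := by
  rw [wins2_iff]
  push_neg
  constructor
  · exact ⟨toRightMovesAdd (Sum.inl (toRightMovesNeg PUnit.unit))⟩
  · intro j
    refine PGame.rightMoves_add_cases (P := fun k =>
      (wins ((-pin + row 0).moveRight k)).1) j ?_ ?_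
    · intro j₀
      rw [PGame.add_moveRight_inl, PGame.moveRight_neg']
      have h0 : pin.moveLeft (toRightMovesNeg.symm j₀) = 0 := rfl
      rw [h0, neg_zero]
      exact wins_zero_add_row0_1
    · intro j₀
      exact (row0_right_empty.false j₀).elim

lemma wins_negpair_row0_1 : ¬ (wins (-pinPair + row 0)).1 := by
  rw [wins1_iff]
  push_neg
  constructor
  · exact ⟨toLeftMovesAdd (Sum.inl (toLeftMovesNeg PUnit.unit))⟩
  · intro i
    refine PGame.leftMoves_add_cases (P := fun k =>
      (wins ((-pinPair + row 0).moveLeft k)).2) i ?_ ?_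
    · intro i₀
      rw [PGame.add_moveLeft_inl, PGame.moveLeft_neg']
      have h0 : pinPair.moveRight (toLeftMovesNeg.symm i₀) = 0 := rfl
      rw [h0, neg_zero]
      exact wins_zero_add_row0_2
    · intro i₀
      exact (row0_left_empty.false i₀).elim

lemma wins_negpair_row0_2 : ¬ (wins (-pinPair + row 0)).2 := by
  rw [wins2_iff]
  push_neg
  constructor
  · exact ⟨toRightMovesAdd (Sum.inl (toRightMovesNeg PUnit.unit))⟩
  · intro j
    refine PGame.rightMoves_add_cases (P := fun k =>
      (wins ((-pinPair + row 0).moveRight k)).1) j ?_ ?_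
    · intro j₀
      rw [PGame.add_moveRight_inl, PGame.moveRight_neg']
      have h0 : pinPair.moveLeft (toRightMovesNeg.symm j₀) = pin := rfl
      rw [h0]
      exact wins_negpin_row0_1
    · intro j₀
      exact (row0_right_empty.false j₀).elim


/-- in Partizan Kayles, `{0|·}` and `{1|0}` are additive inverses modulo
the universe of Kayles positions, with respective misère outcomes R and P, yet neither is
equivalent to the conjugate of the other (non-conjugal invertibility). -/
theorem kayles_nonconjugal_inverses :
    (∀ X : PGame, Kayles X → misereOutcome (pin + pinPair + X) = misereOutcome X) ∧
    misereOutcome pin = Outcome.R ∧ misereOutcome pinPair = Outcome.P ∧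
    ¬ (∀ X : PGame, Kayles X → misereOutcome (pin + X) = misereOutcome (-pinPair + X)) ∧
    ¬ (∀ X : PGame, Kayles X → misereOutcome (pinPair + X) = misereOutcome (-pin + X)) := by
  have hw1 : w 1 = -1 := by simp [w]
  have hw2 : w 2 = 1 := by simp [w]
  have hw0 : w 0 = 0 := by simp [w]
  refine ⟨?_, ?_, ?_, ?_, ?_⟩
  · intro X hX
    obtain ⟨m, hm⟩ := kayles_MK hX
    have hMK : MK (pin + pinPair + X) (({1} + {2} : Multiset ℕ) + m) :=
      (MK.pin.add MK.pair).add hm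
    have hev : ev (({1} + {2} : Multiset ℕ) + m) = ev m := by
      rw [ev_add, ev_add, ev_singleton, ev_singleton, hw1, hw2]; ring
    refine misereOutcome_congr ?_ ?_
    · rw [(MK.wins_eval _ _ hMK).1, (MK.wins_eval X m hm).1, hev]
    · rw [(MK.wins_eval _ _ hMK).2, (MK.wins_eval X m hm).2, hev]
  · exact misereOutcome_eq_R wins_pin_1 wins_pin_2
  · exact misereOutcome_eq_P wins_pinPair_1 wins_pinPair_2
  · intro hcon
    have h := hcon (row 0) (Kayles.row 0)
    have hL : misereOutcome (pin + row 0) = Outcome.R := by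
      have hMK : MK (pin + row 0) (({1} : Multiset ℕ) + {0}) := MK.pin.add (MK.row 0)
      have hev : ev (({1} : Multiset ℕ) + {0}) = -1 := by
        rw [ev_add, ev_singleton, ev_singleton, hw1, hw0]; omega
      have hh := MK.wins_eval _ _ hMK
      refine misereOutcome_eq_R ?_ ?_
      · rw [hh.1, hev]; omega
      · rw [hh.2, hev]; omega
    have hR : misereOutcome (-pinPair + row 0) = Outcome.P :=
      misereOutcome_eq_P wins_negpair_row0_1 wins_negpair_row0_2
    rw [hL, hR] at h
    exact Outcome.noConfusion h
  · intro hcon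
    have h := hcon (row 0) (Kayles.row 0)
    have hL : misereOutcome (pinPair + row 0) = Outcome.P := by
      have hMK : MK (pinPair + row 0) (({2} : Multiset ℕ) + {0}) := MK.pair.add (MK.row 0)
      have hev : ev (({2} : Multiset ℕ) + {0}) = 1 := by
        rw [ev_add, ev_singleton, ev_singleton, hw2, hw0]; omega
      have hh := MK.wins_eval _ _ hMK
      refine misereOutcome_eq_P ?_ ?_
      · rw [hh.1, hev]; omega
      · rw [hh.2, hev]; omega
    have hR : misereOutcome (-pin + row 0) = Outcome.L :=
      misereOutcome_eq_L wins_negpin_row0_1 wins_negpin_row0_2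
    rw [hL, hR] at h
    exact Outcome.noConfusion h

end Misere
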